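/- Let q = g⟨nk⟩_0 and ξ⃗ = (ξ_1, …, ξ_{nk}) ∈ q^* with ξ_i ∈ g_{ī}. If the element (x_0,…,x_{nk−1}) ∈ q stabilizes ξ⃗(t) = (ξ_1, tξ_2, …, t^{nk−1}ξ_{nk}) for some t ≠ 0, then (t^{nk−1}x_0, t^{nk−2}x_1, …, x_{nk−1}) stabilizes ξ⃗; consequently, if (ξ_1,0,…,0) is a regular element of q^*, then all ξ⃗(t), including ξ⃗ itself, are regular elements of q^*. -/

import Mathlib

open Finset Module

section Defs

variable {𝕜 L : Type*} [Field 𝕜] [LieRing L] [LieAlgebra 𝕜 L]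

/-- The bracket of the Takiff algebra `q⟨m⟩`, modelled on `Fin m → L`:
`[x⃗,y⃗]ₗ = ∑_{i+j=l} [xᵢ,yⱼ]`. -/
def takiffBracket (m : ℕ) (x y : Fin m → L) : Fin m → L :=
  fun l => ∑ i : Fin m, ∑ j : Fin m,
    if (i : ℕ) + (j : ℕ) = (l : ℕ) then ⁅x i, y j⁆ else 0

lemma takiffBracket_zero_left (m : ℕ) (y : Fin m → L) :
    takiffBracket m 0 y = 0 := by
  funext l; simp [takiffBracket]

lemma takiffBracket_add_left (m : ℕ) (x x' y : Fin m → L) :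
    takiffBracket m (x + x') y = takiffBracket m x y + takiffBracket m x' y := by
  funext l
  simp only [takiffBracket, Pi.add_apply]
  rw [← Finset.sum_add_distrib]
  refine Finset.sum_congr rfl fun i _ => ?_
  rw [← Finset.sum_add_distrib]
  refine Finset.sum_congr rfl fun j _ => ?_
  split <;> simp [add_lie]

lemma takiffBracket_smul_left (m : ℕ) (c : 𝕜) (x y : Fin m → L) :
    takiffBracket m (c • x) y = c • takiffBracket m x y := by
  funext l
  simp only [takiffBracket, Pi.smul_apply, Finset.smul_sum]
  refine Finset.sum_congr rfl fun i _ => ?_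
  refine Finset.sum_congr rfl fun j _ => ?_
  split <;> simp [smul_lie]

/-- The stabiliser (w.r.t. the coadjoint representation) of a linear functional `ξ`
in the Lie algebra given by the subspace `Sm` of the Takiff algebra `q⟨m⟩`, endowed
with the truncated bracket. -/
def coadjointStabilizer (m : ℕ) (Sm : Submodule 𝕜 (Fin m → L))
    (ξ : (Fin m → L) →ₗ[𝕜] 𝕜) : Submodule 𝕜 (Fin m → L) where
  carrier := {v | v ∈ Sm ∧ ∀ w ∈ Sm, ξ (takiffBracket m v w) = 0}
  zero_mem' := ⟨Sm.zero_mem, fun w _ => by rw [takiffBracket_zero_left, map_zero]⟩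
  add_mem' := fun ha hb => ⟨Sm.add_mem ha.1 hb.1, fun w hw => by
    rw [takiffBracket_add_left, map_add, ha.2 w hw, hb.2 w hw, add_zero]⟩
  smul_mem' := fun c a ha => ⟨Sm.smul_mem c ha.1, fun w hw => by
    rw [takiffBracket_smul_left, map_smul, ha.2 w hw, smul_zero]⟩

/-- The fixed-point subalgebra `g⟨m⟩₀ = g₀ ⋉ g₁ ⋉ …` of `θ̂` inside the Takiff algebra
`g⟨m⟩`: tuples whose `i`-th entry lies in the `ζⁱ`-eigenspace of `θ`. -/
noncomputable def takiffFixedSubalgebra (m : ℕ) (θ : Module.End 𝕜 L) (ζ : 𝕜) :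
    Submodule 𝕜 (Fin m → L) :=
  LinearMap.ker (LinearMap.pi
    (fun i : Fin m => (θ - ζ ^ (i : ℕ) • LinearMap.id) ∘ₗ LinearMap.proj i))

/-- The identification `q^* ≅ g⟨m⟩₁` : the tuple `η = (ξ₁, …, ξ_m)` (with `ξ_j ∈ g_j`)
defines the linear functional `v ↦ ∑ᵢ b(vᵢ, η_{m−1−i})` via the invariant form `b`. -/
noncomputable def pairingFunctional (b : L →ₗ[𝕜] L →ₗ[𝕜] 𝕜) (m : ℕ) (η : Fin m → L) :
    (Fin m → L) →ₗ[𝕜] 𝕜 where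
  toFun v := ∑ i : Fin m, b (v i) (η i.rev)
  map_add' u v := by simp [← Finset.sum_add_distrib]
  map_smul' c v := by simp [Finset.mul_sum]

/-- `ξ` is a regular element of `q^*`: its coadjoint stabiliser in the Lie algebra
`Sm` (with the truncated Takiff bracket) has minimal dimension. -/
def IsCoadjointRegular (m : ℕ) (Sm : Submodule 𝕜 (Fin m → L))
    (ξ : (Fin m → L) →ₗ[𝕜] 𝕜) : Prop :=
  ∀ ξ' : (Fin m → L) →ₗ[𝕜] 𝕜,
    finrank 𝕜 (coadjointStabilizer m Sm ξ) ≤ finrank 𝕜 (coadjointStabilizer m Sm ξ')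

end Defs

/-!
Rescaling the `j`-th coordinate of `q^*` by `t ^ j` and the `i`-th coordinate of `q` by
`t ^ (nk - 1 - i)` turns the truncated bracket paired with `ξ⃗(t)` into the one paired with `ξ⃗`;
this is the first claim, and for `t ≠ 0` the rescaling is invertible, so `dim q^{ξ⃗(t)}` is
constant on `t ≠ 0`. On the other hand `q^{ξ⃗(t)}` is the kernel of a bilinear form on `q`
depending polynomially on `t`. A nonzero minor of maximal size at `t = 0` stays nonzero away from
the finitely many roots of its determinant, so the rank can only drop at finitely many `t`, and
`dim q^{ξ⃗(t)} ≤ dim q^{ξ⃗(0)}` for all `t ≠ 0`, the latter being minimal by assumption.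
-/

open Polynomial

namespace Matrix

variable {K m : Type*} [Field K] [Fintype m] [DecidableEq m]

theorem exists_mul_mul_eq_one (M : Matrix m m K) :
    ∃ (X : Matrix (Fin M.rank) m K) (Y : Matrix m (Fin M.rank) K), X * M * Y = 1 := by
  obtain ⟨V, U, e, -, -, hVMU⟩ := M.exists_rank_normal_form
  let ι : Fin M.rank → m := e.symm ∘ Sum.inl
  refine ⟨V.submatrix ι id, U.submatrix id ι, ?_⟩
  have hsub : (V * M * U).submatrix ι ι = V.submatrix ι id * M * U.submatrix id ι := by
    rw [submatrix_mul _ _ _ id _ Function.bijective_id,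
      submatrix_mul _ _ _ id _ Function.bijective_id]
    rfl
  rw [← hsub, hVMU]
  ext a c
  simp [ι, one_apply]

theorem finite_setOfPred_rank_map_eval_lt (A : Matrix m m K[X]) (t₀ : K) :
    {t | (A.map (eval t)).rank < (A.map (eval t₀)).rank}.Finite := by
  obtain ⟨X, Y, hXY⟩ := (A.map (eval t₀)).exists_mul_mul_eq_one
  set p := (X.map C * A * Y.map C).det
  have hp : ∀ t, p.eval t = (X * A.map (eval t) * Y).det := fun t => by
    rw [← coe_evalRingHom, RingHom.map_det, RingHom.mapMatrix_apply, Matrix.map_mul,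
      Matrix.map_mul]
    congr 3 <;> ext <;> simp
  have hp0 : p ≠ 0 := fun h => by simpa [h, hXY] using hp t₀
  refine (finite_setOfPred_isRoot hp0).subset fun t hrank => ?_
  by_contra hdet
  rw [Set.mem_ofPred_eq, IsRoot, hp] at hdet
  have hle := (rank_mul_le_left _ Y).trans (rank_mul_le_right X (A.map (eval t)))
  rw [rank_of_det_ne_zero hdet, Fintype.card_fin] at hle
  exact hrank.not_ge hle

end Matrix

namespace LinearMap

variable {K V : Type*} [Field K] [AddCommGroup V] [Module K V] [FiniteDimensional K V]

theorem finite_setOfPred_finrank_ker_lt (f : K → V →ₗ[K] V →ₗ[K] K) (P : V → V → K[X])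
    (hP : ∀ t v w, f t v w = (P v w).eval t) (t₀ : K) :
    {t | finrank K (ker (f t₀)) < finrank K (ker (f t))}.Finite := by
  let b := finBasis K V
  let A : Matrix (Fin (finrank K V)) (Fin (finrank K V)) K[X] := .of fun i j => P (b j) (b i)
  have hrank : ∀ t, (A.map (eval t)).rank = finrank K (range (f t)) := fun t => by
    have hA : A.map (eval t) = toMatrix b b.dualBasis (f t) := by
      ext i j
      simp [A, toMatrix_apply, hP]
    rw [hA, Matrix.rank_eq_finrank_range_toLin _ b.dualBasis b, Matrix.toLin_toMatrix]
  refine (A.finite_setOfPred_rank_map_eval_lt t₀).subset fun t ht => ?_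
  have h₀ := finrank_range_add_finrank_ker (f t₀)
  have h := finrank_range_add_finrank_ker (f t)
  simp only [Set.mem_ofPred_eq, hrank] at ht ⊢
  omega

end LinearMap

section Takiff

variable {𝕜 L : Type*} [Field 𝕜] [LieRing L] [LieAlgebra 𝕜 L] {m : ℕ}

lemma takiffBracket_add_right (x y y' : Fin m → L) :
    takiffBracket m x (y + y') = takiffBracket m x y + takiffBracket m x y' := by
  funext l
  simp only [takiffBracket, Pi.add_apply, ← Finset.sum_add_distrib]
  refine Finset.sum_congr rfl fun i _ => Finset.sum_congr rfl fun j _ => ?_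
  split_ifs <;> simp [lie_add]

lemma takiffBracket_smul_right (c : 𝕜) (x y : Fin m → L) :
    takiffBracket m x (c • y) = c • takiffBracket m x y := by
  funext l
  simp only [takiffBracket, Pi.smul_apply, Finset.smul_sum]
  refine Finset.sum_congr rfl fun i _ => Finset.sum_congr rfl fun j _ => ?_
  split_ifs <;> simp [lie_smul]

lemma mem_takiffFixedSubalgebra_iff (θ : Module.End 𝕜 L) (ζ : 𝕜) (v : Fin m → L) :
    v ∈ takiffFixedSubalgebra m θ ζ ↔ ∀ i : Fin m, θ (v i) = ζ ^ (i : ℕ) • v i := by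
  simp [takiffFixedSubalgebra, funext_iff, sub_eq_zero]

lemma smul_mem_takiffFixedSubalgebra {θ : Module.End 𝕜 L} {ζ : 𝕜} (c : Fin m → 𝕜)
    {v : Fin m → L} (hv : v ∈ takiffFixedSubalgebra m θ ζ) :
    (fun i => c i • v i) ∈ takiffFixedSubalgebra m θ ζ := by
  rw [mem_takiffFixedSubalgebra_iff] at hv ⊢
  intro i
  rw [map_smul, hv i, smul_comm]

lemma pairingFunctional_takiffBracket (b : L →ₗ[𝕜] L →ₗ[𝕜] 𝕜) (η x y : Fin m → L) :
    pairingFunctional b m η (takiffBracket m x y) =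
      ∑ l : Fin m, ∑ i : Fin m, ∑ j : Fin m,
        if (i : ℕ) + (j : ℕ) = l then b ⁅x i, y j⁆ (η l.rev) else 0 := by
  simp only [pairingFunctional, takiffBracket, LinearMap.coe_mk, AddHom.coe_mk, map_sum,
    LinearMap.sum_apply]
  refine Finset.sum_congr rfl fun l _ => Finset.sum_congr rfl fun i _ =>
    Finset.sum_congr rfl fun j _ => ?_
  split_ifs <;> simp

lemma rescale_mem_coadjointStabilizer {θ : Module.End 𝕜 L} {ζ : 𝕜} (b : L →ₗ[𝕜] L →ₗ[𝕜] 𝕜)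
    (η : Fin m → L) (t : 𝕜) {v : Fin m → L}
    (hv : v ∈ coadjointStabilizer m (takiffFixedSubalgebra m θ ζ)
      (pairingFunctional b m (fun j => t ^ (j : ℕ) • η j))) :
    (fun i : Fin m => t ^ (m - 1 - (i : ℕ)) • v i) ∈
      coadjointStabilizer m (takiffFixedSubalgebra m θ ζ) (pairingFunctional b m η) := by
  obtain ⟨hvq, hξ⟩ := hv
  refine ⟨smul_mem_takiffFixedSubalgebra _ hvq, fun w hw => ?_⟩
  have hwt := hξ _ (smul_mem_takiffFixedSubalgebra (fun j => t ^ (j : ℕ)) hw)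
  rw [pairingFunctional_takiffBracket] at hwt ⊢
  refine Eq.trans ?_ hwt
  refine Finset.sum_congr rfl fun l _ => Finset.sum_congr rfl fun i _ =>
    Finset.sum_congr rfl fun j _ => ?_
  split_ifs with hij
  · have hpow : m - 1 - (i : ℕ) = j + (m - (l + 1)) := by omega
    simp only [smul_lie, lie_smul, map_smul, LinearMap.smul_apply, smul_eq_mul, Fin.val_rev,
      hpow, pow_add]
    ring
  · rfl

def coadjointForm (S : Submodule 𝕜 (Fin m → L)) (ξ : (Fin m → L) →ₗ[𝕜] 𝕜) :
    S →ₗ[𝕜] S →ₗ[𝕜] 𝕜 :=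
  LinearMap.mk₂ 𝕜 (fun v w => ξ (takiffBracket m v w))
    (fun v v' w => by simp [takiffBracket_add_left])
    (fun c v w => by simp [takiffBracket_smul_left])
    (fun v w w' => by simp [takiffBracket_add_right])
    (fun c v w => by simp [takiffBracket_smul_right])

lemma coadjointStabilizer_eq_map_ker (S : Submodule 𝕜 (Fin m → L))
    (ξ : (Fin m → L) →ₗ[𝕜] 𝕜) :
    coadjointStabilizer m S ξ = (LinearMap.ker (coadjointForm S ξ)).map S.subtype := by
  ext v
  constructor
  · rintro ⟨hv, hξ⟩
    exact ⟨⟨v, hv⟩, LinearMap.ext fun w => hξ w w.2, rfl⟩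
  · rintro ⟨v, hv, rfl⟩
    exact ⟨v.2, fun w hw => LinearMap.congr_fun hv ⟨w, hw⟩⟩

lemma finrank_coadjointStabilizer_eq_finrank_ker (S : Submodule 𝕜 (Fin m → L))
    (ξ : (Fin m → L) →ₗ[𝕜] 𝕜) :
    finrank 𝕜 (coadjointStabilizer m S ξ) = finrank 𝕜 (LinearMap.ker (coadjointForm S ξ)) := by
  rw [coadjointStabilizer_eq_map_ker, Submodule.finrank_map_subtype_eq]

lemma pairingFunctional_smul_pow_eq_eval (b : L →ₗ[𝕜] L →ₗ[𝕜] 𝕜) (η : Fin m → L) (t : 𝕜)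
    (v : Fin m → L) :
    pairingFunctional b m (fun j => t ^ (j : ℕ) • η j) v =
      (∑ i : Fin m, C (b (v i) (η i.rev)) * X ^ (i.rev : ℕ)).eval t := by
  simp only [pairingFunctional, LinearMap.coe_mk, AddHom.coe_mk, map_smul, smul_eq_mul,
    eval_finsetSum, eval_mul, eval_C, eval_pow, eval_X]
  exact Finset.sum_congr rfl fun i _ => mul_comm _ _

variable [FiniteDimensional 𝕜 L]

lemma finite_setOfPred_finrank_coadjointStabilizer_lt (S : Submodule 𝕜 (Fin m → L))
    (b : L →ₗ[𝕜] L →ₗ[𝕜] 𝕜) (η : Fin m → L) (t₀ : 𝕜) :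
    {t : 𝕜 |
      finrank 𝕜 (coadjointStabilizer m S (pairingFunctional b m (fun j => t₀ ^ (j : ℕ) • η j))) <
        finrank 𝕜 (coadjointStabilizer m S (pairingFunctional b m (fun j => t ^ (j : ℕ) • η j)))
      }.Finite := by
  simp only [finrank_coadjointStabilizer_eq_finrank_ker]
  exact LinearMap.finite_setOfPred_finrank_ker_lt
    (fun t => coadjointForm S (pairingFunctional b m (fun j => t ^ (j : ℕ) • η j)))
    (fun v w => ∑ i : Fin m, C (b (takiffBracket m v w i) (η i.rev)) * X ^ (i.rev : ℕ))
    (fun t v w => pairingFunctional_smul_pow_eq_eval b η t _) t₀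

lemma finrank_coadjointStabilizer_smul_pow_le {θ : Module.End 𝕜 L} {ζ : 𝕜}
    (b : L →ₗ[𝕜] L →ₗ[𝕜] 𝕜) (η : Fin m → L) {t : 𝕜} (ht : t ≠ 0) :
    finrank 𝕜 (coadjointStabilizer m (takiffFixedSubalgebra m θ ζ)
        (pairingFunctional b m (fun j => t ^ (j : ℕ) • η j))) ≤
      finrank 𝕜 (coadjointStabilizer m (takiffFixedSubalgebra m θ ζ)
        (pairingFunctional b m η)) := by
  let Φ : (Fin m → L) ≃ₗ[𝕜] (Fin m → L) := LinearEquiv.piCongrRight fun i =>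
    LinearEquiv.smulOfNeZero 𝕜 L (t ^ (m - 1 - (i : ℕ))) (pow_ne_zero _ ht)
  have hΦ : ∀ v, Φ v = fun i : Fin m => t ^ (m - 1 - (i : ℕ)) • v i := fun v => rfl
  rw [← LinearEquiv.finrank_map_eq Φ]
  refine Submodule.finrank_mono (Submodule.map_le_iff_le_comap.2 fun v hv => ?_)
  rw [Submodule.mem_comap, LinearEquiv.coe_coe, hΦ]
  exact rescale_mem_coadjointStabilizer b η t hv

lemma finrank_coadjointStabilizer_smul_pow_eq {θ : Module.End 𝕜 L} {ζ : 𝕜}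
    (b : L →ₗ[𝕜] L →ₗ[𝕜] 𝕜) (η : Fin m → L) {t : 𝕜} (ht : t ≠ 0) :
    finrank 𝕜 (coadjointStabilizer m (takiffFixedSubalgebra m θ ζ)
        (pairingFunctional b m (fun j => t ^ (j : ℕ) • η j))) =
      finrank 𝕜 (coadjointStabilizer m (takiffFixedSubalgebra m θ ζ)
        (pairingFunctional b m η)) := by
  refine le_antisymm (finrank_coadjointStabilizer_smul_pow_le b η ht) ?_
  have hη : (fun j : Fin m => t⁻¹ ^ (j : ℕ) • t ^ (j : ℕ) • η j) = η := by
    funext j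
    rw [smul_smul, ← mul_pow, inv_mul_cancel₀ ht, one_pow, one_smul]
  have h := finrank_coadjointStabilizer_smul_pow_le (θ := θ) (ζ := ζ) b
    (fun j => t ^ (j : ℕ) • η j) (inv_ne_zero ht)
  rwa [hη] at h

end Takiff

theorem scaled_functional_stabilizer_and_regularity_general
    {𝕜 L : Type*} [Field 𝕜] [CharZero 𝕜]
    [LieRing L] [LieAlgebra 𝕜 L] [FiniteDimensional 𝕜 L]
    (n k : ℕ)
    (ζ : 𝕜)
    (θ : Module.End 𝕜 L)
    (b : L →ₗ[𝕜] L →ₗ[𝕜] 𝕜)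
    (η : Fin (n * k) → L) :
    -- rescaling of stabilisers
    (∀ (t : 𝕜), t ≠ 0 → ∀ v : Fin (n * k) → L,
      v ∈ coadjointStabilizer (n * k) (takiffFixedSubalgebra (n * k) θ ζ)
        (pairingFunctional b (n * k) (fun j => t ^ (j : ℕ) • η j)) →
      (fun i : Fin (n * k) => t ^ (n * k - 1 - (i : ℕ)) • v i) ∈
        coadjointStabilizer (n * k) (takiffFixedSubalgebra (n * k) θ ζ)
          (pairingFunctional b (n * k) η)) ∧
    -- consequence for regularity
    (IsCoadjointRegular (n * k) (takiffFixedSubalgebra (n * k) θ ζ)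
        (pairingFunctional b (n * k) (fun j => (0 : 𝕜) ^ (j : ℕ) • η j)) →
      ∀ t : 𝕜, IsCoadjointRegular (n * k) (takiffFixedSubalgebra (n * k) θ ζ)
        (pairingFunctional b (n * k) (fun j => t ^ (j : ℕ) • η j))) := by
  refine ⟨fun t _ v hv => rescale_mem_coadjointStabilizer b η t hv, fun hreg t ξ' => ?_⟩
  rcases eq_or_ne t 0 with rfl | ht
  · exact hreg ξ'
  obtain ⟨u, hu⟩ := ((finite_setOfPred_finrank_coadjointStabilizer_lt
    (takiffFixedSubalgebra (n * k) θ ζ) b η 0).union (Set.finite_singleton 0)).exists_notMem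
  rw [Set.mem_union, not_or, Set.mem_ofPred_eq, not_lt, Set.mem_singleton_iff] at hu
  calc _ = _ := finrank_coadjointStabilizer_smul_pow_eq b η ht
    _ = _ := (finrank_coadjointStabilizer_smul_pow_eq b η hu.2).symm
    _ ≤ _ := hu.1
    _ ≤ _ := hreg ξ'

/-- Let `q = g⟨nk⟩₀` with `q^* ≅ g⟨nk⟩₁`, and let
`ξ⃗ = (ξ₁, …, ξ_{nk})` with `ξ_i ∈ g_ī` (encoded by the tuple `η`, `η_j ∈ g_{j+1}`).
If `(x₀, …, x_{nk−1}) ∈ q` stabilises `ξ⃗(t) = (ξ₁, tξ₂, …, t^{nk−1} ξ_{nk})` for some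
`t ≠ 0`, then `(t^{nk−1} x₀, …, x_{nk−1})` stabilises `ξ⃗`.  Consequently, if
`(ξ₁, 0, …, 0) = ξ⃗(0)` is a regular element of `q^*`, then all the `ξ⃗(t)`, including
`ξ⃗ = ξ⃗(1)` itself, are regular elements of `q^*`. -/
theorem scaled_functional_stabilizer_and_regularity
    {𝕜 L : Type*} [Field 𝕜] [CharZero 𝕜] [IsAlgClosed 𝕜]
    [LieRing L] [LieAlgebra 𝕜 L] [FiniteDimensional 𝕜 L]
    (hred : LieAlgebra.radical 𝕜 L = LieAlgebra.center 𝕜 L)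
    (n k : ℕ) (hn : 0 < n) (hk : 0 < k)
    (ζ : 𝕜) (hζ : IsPrimitiveRoot ζ k)
    (θ : Module.End 𝕜 L) (hbr : ∀ x y : L, θ ⁅x, y⁆ = ⁅θ x, θ y⁆)
    (hθk : θ ^ k = 1)
    (b : L →ₗ[𝕜] L →ₗ[𝕜] 𝕜)
    (hsymm : ∀ x y, b x y = b y x)
    (hnondeg : ∀ x, (∀ y, b x y = 0) → x = 0)
    (hinv : ∀ x y z, b ⁅x, y⁆ z = b x ⁅y, z⁆)
    (hbθ : ∀ x y, b (θ x) (θ y) = b x y)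
    (η : Fin (n * k) → L)
    (hη : ∀ j : Fin (n * k), θ (η j) = ζ ^ ((j : ℕ) + 1) • η j) :
    -- rescaling of stabilisers
    (∀ (t : 𝕜), t ≠ 0 → ∀ v : Fin (n * k) → L,
      v ∈ coadjointStabilizer (n * k) (takiffFixedSubalgebra (n * k) θ ζ)
        (pairingFunctional b (n * k) (fun j => t ^ (j : ℕ) • η j)) →
      (fun i : Fin (n * k) => t ^ (n * k - 1 - (i : ℕ)) • v i) ∈
        coadjointStabilizer (n * k) (takiffFixedSubalgebra (n * k) θ ζ)
          (pairingFunctional b (n * k) η)) ∧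
    -- consequence for regularity
    (IsCoadjointRegular (n * k) (takiffFixedSubalgebra (n * k) θ ζ)
        (pairingFunctional b (n * k) (fun j => (0 : 𝕜) ^ (j : ℕ) • η j)) →
      ∀ t : 𝕜, IsCoadjointRegular (n * k) (takiffFixedSubalgebra (n * k) θ ζ)
        (pairingFunctional b (n * k) (fun j => t ^ (j : ℕ) • η j))) :=
  scaled_functional_stabilizer_and_regularity_general n k ζ θ b η
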